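/- For ε ≥ 0 and ξ ∈ (0, √2), define V_ε(ξ) = (1/2)·log(√((1 − ξ²)² + ε²)/√(1 + ε²)), so that V_0(ξ) = (1/2)·log|1 − ξ²|. Then for every fixed a ∈ (0, √2): (i) for every ε ≥ 0 the function ξ ↦ 1/√(−2·V_ε(ξ)) is integrable on (a, √2); and (ii) lim_{ε→0⁺} ∫_a^{√2} dξ/√(−2·V_ε(ξ)) = ∫_a^{√2} dξ/√(−log|1 − ξ²|). -/

import Mathlib

open MeasureTheory Filter Set

/-- The regularized potential V_ε(ξ) = (1/2)·log(√((1 − ξ²)² + ε²)/√(1 + ε²)). -/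
noncomputable def Vreg (ε ξ : ℝ) : ℝ :=
  (1 / 2) * Real.log (Real.sqrt ((1 - ξ ^ 2) ^ 2 + ε ^ 2) / Real.sqrt (1 + ε ^ 2))

/-!
Since `log y ≤ y - 1`, for `ξ ∈ (a, √2)`, `ξ ≠ 1`,
`-2 V_ε(ξ) ≥ (1 - (1 - ξ²)²) / (2(1 + ε²)) = ξ²(√2 + ξ)(√2 - ξ) / (2(1 + ε²))`
`≥ a²√2 (√2 - ξ) / (2(1 + ε²))`,
so the integrand is dominated by a multiple of `(√2 - ξ)^(-1/2)`, uniformly in `ε ≤ 1`.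
This gives integrability, and dominated convergence gives the limit, since off the null set `{1}`
the integrand is continuous in `ε`.
-/

open Real Topology

theorem Vreg_eq (ε ξ : ℝ) :
    Vreg ε ξ = log (((1 - ξ ^ 2) ^ 2 + ε ^ 2) / (1 + ε ^ 2)) / 4 := by
  rw [Vreg, ← sqrt_div' _ (by positivity), log_sqrt (by positivity)]
  ring

theorem neg_two_mul_Vreg_zero (ξ : ℝ) : -(2 * Vreg 0 ξ) = -log |1 - ξ ^ 2| := by
  simp [Vreg, sqrt_sq_eq_abs]

theorem one_sub_sq_ne_zero {ξ : ℝ} (h0 : 0 < ξ) (h1 : ξ ≠ 1) : 1 - ξ ^ 2 ≠ 0 := by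
  intro h
  exact h1 (by nlinarith)

theorem one_sub_sq_div_le_neg_two_mul_Vreg {ε ξ : ℝ} (hξ : 1 - ξ ^ 2 ≠ 0) :
    (1 - (1 - ξ ^ 2) ^ 2) / (2 * (1 + ε ^ 2)) ≤ -(2 * Vreg ε ξ) := by
  have hB : 0 < 1 + ε ^ 2 := by positivity
  have hA : 0 < (1 - ξ ^ 2) ^ 2 + ε ^ 2 := by positivity
  have hlog := log_le_sub_one_of_pos (div_pos hA hB)
  have hsub : ((1 - ξ ^ 2) ^ 2 + ε ^ 2) / (1 + ε ^ 2) - 1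
      = -(2 * ((1 - (1 - ξ ^ 2) ^ 2) / (2 * (1 + ε ^ 2)))) := by
    field_simp
    ring
  rw [Vreg_eq]
  linarith

theorem mul_sqrt_two_sub_le_one_sub_sq {a ξ : ℝ} (ha : 0 ≤ a) (haξ : a ≤ ξ) (hξ : ξ ≤ √2) :
    a ^ 2 * √2 * (√2 - ξ) ≤ 1 - (1 - ξ ^ 2) ^ 2 := by
  calc a ^ 2 * √2 * (√2 - ξ) ≤ ξ ^ 2 * (√2 + ξ) * (√2 - ξ) := by
        gcongr
        linarith
    _ = 1 - (1 - ξ ^ 2) ^ 2 := by linear_combination ξ ^ 2 * sq_sqrt (zero_le_two : (0:ℝ) ≤ 2)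

theorem mul_sqrt_two_sub_le_neg_two_mul_Vreg {a ε ξ : ℝ} (ha : 0 < a) (hξ : ξ ∈ Ioo a √2)
    (hξ1 : ξ ≠ 1) : a ^ 2 * √2 / (2 * (1 + ε ^ 2)) * (√2 - ξ) ≤ -(2 * Vreg ε ξ) :=
  calc a ^ 2 * √2 / (2 * (1 + ε ^ 2)) * (√2 - ξ)
      = a ^ 2 * √2 * (√2 - ξ) / (2 * (1 + ε ^ 2)) := by ring
    _ ≤ (1 - (1 - ξ ^ 2) ^ 2) / (2 * (1 + ε ^ 2)) := by
        gcongr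
        exact mul_sqrt_two_sub_le_one_sub_sq ha.le hξ.1.le hξ.2.le
    _ ≤ -(2 * Vreg ε ξ) :=
        one_sub_sq_div_le_neg_two_mul_Vreg (one_sub_sq_ne_zero (ha.trans hξ.1) hξ1)

theorem one_div_sqrt_le_of_mul_le {c x y : ℝ} (hc : 0 < c) (hy : 0 < y) (h : c * y ≤ x) :
    1 / √x ≤ 1 / √c * (1 / √y) :=
  calc 1 / √x ≤ 1 / √(c * y) :=
        one_div_le_one_div_of_le (sqrt_pos.2 (mul_pos hc hy)) (sqrt_le_sqrt h)
    _ = 1 / √c * (1 / √y) := by rw [sqrt_mul hc.le, one_div_mul_one_div]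

theorem one_div_sqrt_neg_two_mul_Vreg_le {a c ε ξ : ℝ} (ha : 0 < a) (hc : 0 < c)
    (hcε : c ≤ a ^ 2 * √2 / (2 * (1 + ε ^ 2))) (hξ : ξ ∈ Ioo a √2) (hξ1 : ξ ≠ 1) :
    1 / √(-(2 * Vreg ε ξ)) ≤ 1 / √c * (1 / √(√2 - ξ)) := by
  have hgap : 0 < √2 - ξ := sub_pos.2 hξ.2
  exact one_div_sqrt_le_of_mul_le hc hgap <|
    (mul_le_mul_of_nonneg_right hcε hgap.le).trans
      (mul_sqrt_two_sub_le_neg_two_mul_Vreg ha hξ hξ1)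

theorem integrableOn_one_div_sqrt_sub (a b : ℝ) :
    IntegrableOn (fun x => 1 / √(b - x)) (Ioo a b) := by
  have h : IntervalIntegrable (fun x => (b - x) ^ (-(1 / 2) : ℝ)) volume a b := by
    simpa using (intervalIntegral.intervalIntegrable_rpow' (a := b - a) (b := b - b)
      (r := -(1 / 2)) (by norm_num)).comp_sub_left b
  refine (h.def'.mono_set (Ioo_subset_Ioc_self.trans Ioc_subset_uIoc)).congr_fun
    (fun x hx => ?_) measurableSet_Ioo
  dsimp only
  rw [rpow_neg (sub_pos.2 hx.2).le, ← sqrt_eq_rpow, one_div]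

theorem measurable_one_div_sqrt_neg_two_mul_Vreg (ε : ℝ) :
    Measurable fun ξ => 1 / √(-(2 * Vreg ε ξ)) := by
  unfold Vreg
  fun_prop

theorem continuous_Vreg_left {ξ : ℝ} (hξ : 1 - ξ ^ 2 ≠ 0) : Continuous fun ε => Vreg ε ξ := by
  simp_rw [Vreg_eq]
  fun_prop (disch := intro; positivity)

theorem tendsto_one_div_sqrt_neg_two_mul_Vreg {a ξ : ℝ} (ha : 0 < a) (hξ : ξ ∈ Ioo a √2)
    (hξ1 : ξ ≠ 1) :
    Tendsto (fun ε => 1 / √(-(2 * Vreg ε ξ))) (𝓝 0) (𝓝 (1 / √(-(2 * Vreg 0 ξ)))) := by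
  have hpos : 0 < -(2 * Vreg 0 ξ) := by
    have hgap : 0 < √2 - ξ := sub_pos.2 hξ.2
    exact lt_of_lt_of_le (by positivity) (mul_sqrt_two_sub_le_neg_two_mul_Vreg ha hξ hξ1)
  have hV := continuous_Vreg_left (one_sub_sq_ne_zero (ha.trans hξ.1) hξ1)
  exact (continuousAt_const.div (hV.const_mul 2).neg.sqrt.continuousAt
    (sqrt_pos.2 hpos).ne').tendsto

theorem regularized_integral_convergence (a : ℝ) (ha : a ∈ Ioo 0 (Real.sqrt 2)) :
    (∀ ε : ℝ, 0 ≤ ε →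
      IntegrableOn (fun ξ : ℝ => 1 / Real.sqrt (-(2 * Vreg ε ξ)))
        (Ioo a (Real.sqrt 2))) ∧
    Tendsto (fun ε : ℝ => ∫ ξ in a..Real.sqrt 2, 1 / Real.sqrt (-(2 * Vreg ε ξ)))
      (nhdsWithin 0 (Ioi 0))
      (nhds (∫ ξ in a..Real.sqrt 2, 1 / Real.sqrt (-Real.log |1 - ξ ^ 2|))) := by
  obtain ⟨ha0, haS⟩ := ha
  have hae : ∀ᵐ ξ ∂volume.restrict (Ioo a √2), ξ ∈ Ioo a √2 ∧ ξ ≠ 1 :=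
    (ae_restrict_mem measurableSet_Ioo).and (ae_restrict_of_ae (volume.ae_ne 1))
  have hdom : ∀ {c ε : ℝ}, 0 < c → c ≤ a ^ 2 * √2 / (2 * (1 + ε ^ 2)) →
      ∀ᵐ ξ ∂volume.restrict (Ioo a √2),
        ‖1 / √(-(2 * Vreg ε ξ))‖ ≤ 1 / √c * (1 / √(√2 - ξ)) :=
    fun hc hcε => hae.mono fun ξ ⟨hξ, hξ1⟩ => by
      rw [norm_of_nonneg (by positivity)]
      exact one_div_sqrt_neg_two_mul_Vreg_le ha0 hc hcε hξ hξ1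
  refine ⟨fun ε _ => ?_, ?_⟩
  · exact Integrable.mono' ((integrableOn_one_div_sqrt_sub a √2).const_mul _)
      (measurable_one_div_sqrt_neg_two_mul_Vreg ε).aestronglyMeasurable
      (hdom (by positivity) le_rfl)
  · simp_rw [intervalIntegral.integral_of_le haS.le, integral_Ioc_eq_integral_Ioo,
      ← neg_two_mul_Vreg_zero]
    refine tendsto_integral_filter_of_dominated_convergence _
      (Eventually.of_forall fun ε =>
        (measurable_one_div_sqrt_neg_two_mul_Vreg ε).aestronglyMeasurable)
      ?_ ((integrableOn_one_div_sqrt_sub a √2).const_mul (1 / √(a ^ 2 * √2 / 4))) ?_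
    · filter_upwards [Ioc_mem_nhdsGT zero_lt_one] with ε hε
      refine hdom (by positivity) ?_
      gcongr
      nlinarith [hε.1, hε.2]
    · filter_upwards [hae] with ξ ⟨hξ, hξ1⟩
      exact (tendsto_one_div_sqrt_neg_two_mul_Vreg ha0 hξ hξ1).mono_left nhdsWithin_le_nhds
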